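/- Let â^{(1)}, …, â^{(f)} be symmetrized multiplication operators of orders r₁, …, r_f with associated non-symmetrized operators â^{(1)}_ns, …, â^{(f)}_ns (as defined in the context). Then for every p ∈ ℕ and every x ∈ 𝓕_p that is invariant under all permutations of its arguments, the fully symmetrized composition equals the symmetrization of the non-symmetrized composition: â^{(f)}(â^{(f−1)}(⋯ â^{(1)} x ⋯)) = P_sym(â^{(f)}_ns(â^{(f−1)}_ns(⋯ â^{(1)}_ns x ⋯))). -/

import Mathlib

/-- Full symmetrization on the `p`-particle space `𝓕_p = ((Fin p → α) → V)`:
`(P_sym x)(k) = (1/p!) ∑_{ρ ∈ Perm(Fin p)} x (k ∘ ρ)`. -/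
noncomputable def Psym {α V : Type*} [AddCommGroup V] [Module ℚ V] (p : ℕ)
    (x : (Fin p → α) → V) : (Fin p → α) → V :=
  fun k => ((p.factorial : ℚ)⁻¹) • ∑ ρ : Equiv.Perm (Fin p), x (k ∘ ρ)

/-- The non-symmetrized multiplication operator of order `r` associated to a family
`A = (A_m)_m` of `End(V)`-valued functions:
`(â_ns x)(k₁,…,k_{p+r}) = A_{p+r}(k₁,…,k_{p+r}) (x (k₁,…,k_p))`. -/
def nsOp {α V : Type*} [AddCommGroup V] [Module ℚ V] (r : ℕ)
    (A : ∀ m : ℕ, (Fin m → α) → Module.End ℚ V) (p : ℕ)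
    (x : (Fin p → α) → V) : (Fin (p + r) → α) → V :=
  fun k => A (p + r) k (x fun i : Fin p => k (Fin.castAdd r i))

/-- The particle number reached after applying a list of operators of given orders,
starting from `p`. -/
def totalIdx {α V : Type*} [AddCommGroup V] [Module ℚ V] (p : ℕ)
    (ops : List (ℕ × (∀ m : ℕ, (Fin m → α) → Module.End ℚ V))) : ℕ :=
  ops.foldl (fun q op => q + op.1) p

/-- The composition `â^{(f)}_ns (⋯ (â^{(1)}_ns x) ⋯)` of the non-symmetrized operators
associated to a list of (order, family) pairs, applied from the head of the list on. -/
def compNs {α V : Type*} [AddCommGroup V] [Module ℚ V] :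
    (p : ℕ) → (ops : List (ℕ × (∀ m : ℕ, (Fin m → α) → Module.End ℚ V))) →
      ((Fin p → α) → V) → ((Fin (totalIdx p ops) → α) → V)
  | _, [], x => x
  | p, op :: rest, x => compNs (p + op.1) rest (nsOp op.1 op.2 p x)

/-- The composition `â^{(f)} (⋯ (â^{(1)} x) ⋯)` of the symmetrized operators
`â = P_sym ∘ â_ns` associated to a list of (order, family) pairs, applied from the head of
the list on. -/
noncomputable def compSym {α V : Type*} [AddCommGroup V] [Module ℚ V] :
    (p : ℕ) → (ops : List (ℕ × (∀ m : ℕ, (Fin m → α) → Module.End ℚ V))) →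
      ((Fin p → α) → V) → ((Fin (totalIdx p ops) → α) → V)
  | _, [], x => x
  | p, op :: rest, x => compSym (p + op.1) rest (Psym (p + op.1) (nsOp op.1 op.2 p x))

/-!
Because `A_{p+r}` is invariant under permutations of `Fin (p + r)` fixing the last `r` points,
`nsOp` turns a permutation `σ` of the arguments of its input into the permutation of its
output that acts as `σ` on the first `p` points. Averaging over `σ` gives
`Psym ∘ nsOp ∘ Psym = Psym ∘ nsOp`, so every inner symmetrization in `compSym` can be dropped
once the outermost one is applied; the innermost `Psym` disappears since `x` is symmetric.
-/

section Symmetrization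

variable {α V : Type*} [AddCommGroup V] [Module ℚ V]

noncomputable def Psymₗ (p : ℕ) : ((Fin p → α) → V) →ₗ[ℚ] ((Fin p → α) → V) where
  toFun := Psym p
  map_add' y z := by funext k; simp [Psym, Finset.sum_add_distrib]
  map_smul' c y := by funext k; simp [Psym, Finset.smul_sum, smul_comm c]

def nsOpₗ (r : ℕ) (A : ∀ m : ℕ, (Fin m → α) → Module.End ℚ V) (p : ℕ) :
    ((Fin p → α) → V) →ₗ[ℚ] ((Fin (p + r) → α) → V) where
  toFun := nsOp r A p
  map_add' y z := by funext k; simp [nsOp]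
  map_smul' c y := by funext k; simp [nsOp]

theorem inv_factorial_smul_sum_perm {W : Type*} [AddCommGroup W] [Module ℚ W] (p : ℕ)
    (w : W) :
    ((p.factorial : ℚ)⁻¹) • ∑ _σ : Equiv.Perm (Fin p), w = w := by
  rw [Finset.sum_const, Finset.card_univ, Fintype.card_perm, Fintype.card_fin,
    ← Nat.cast_smul_eq_nsmul ℚ, smul_smul,
    inv_mul_cancel₀ (Nat.cast_ne_zero.mpr p.factorial_ne_zero), one_smul]

theorem Psym_eq_inv_factorial_smul_sum (p : ℕ) (y : (Fin p → α) → V) :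
    Psym p y = ((p.factorial : ℚ)⁻¹) • ∑ σ : Equiv.Perm (Fin p), fun k => y (k ∘ σ) := by
  funext k
  simp [Psym, Finset.sum_apply]

theorem Psym_apply_comp_perm (p : ℕ) (y : (Fin p → α) → V) (ρ : Equiv.Perm (Fin p))
    (k : Fin p → α) : Psym p y (k ∘ ρ) = Psym p y k := by
  simp only [Psym]
  congr 1
  exact Equiv.sum_comp (Equiv.mulLeft ρ) fun σ : Equiv.Perm (Fin p) => y (k ∘ σ)

theorem Psym_comp_perm (p : ℕ) (y : (Fin p → α) → V) (π : Equiv.Perm (Fin p)) :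
    Psym p (fun k => y (k ∘ π)) = Psym p y := by
  funext k
  simp only [Psym]
  congr 1
  exact Equiv.sum_comp (Equiv.mulRight π) fun σ : Equiv.Perm (Fin p) => y (k ∘ σ)

theorem Psym_eq_self (p : ℕ) {y : (Fin p → α) → V}
    (hy : ∀ ρ : Equiv.Perm (Fin p), ∀ k, y (k ∘ ρ) = y k) : Psym p y = y := by
  funext k
  simp only [Psym, hy]
  exact inv_factorial_smul_sum_perm p (y k)

theorem Psym_Psym (p : ℕ) (y : (Fin p → α) → V) : Psym p (Psym p y) = Psym p y :=
  Psym_eq_self p (Psym_apply_comp_perm p y)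

def permCastAdd {p : ℕ} (r : ℕ) (σ : Equiv.Perm (Fin p)) : Equiv.Perm (Fin (p + r)) :=
  finSumFinEquiv.permCongr (σ.sumCongr (Equiv.refl (Fin r)))

theorem permCastAdd_castAdd {p : ℕ} (r : ℕ) (σ : Equiv.Perm (Fin p)) (i : Fin p) :
    permCastAdd r σ (Fin.castAdd r i) = Fin.castAdd r (σ i) := by
  simp [permCastAdd]

theorem permCastAdd_apply_of_le {p : ℕ} (r : ℕ) (σ : Equiv.Perm (Fin p)) (l : Fin (p + r))
    (hl : p ≤ (l : ℕ)) : permCastAdd r σ l = l := by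
  obtain ⟨j, rfl⟩ : ∃ j : Fin r, l = Fin.natAdd p j :=
    ⟨⟨(l : ℕ) - p, by omega⟩, by ext; simp only [Fin.natAdd_mk]; omega⟩
  simp [permCastAdd]

def HeadInvariant (r : ℕ) (A : ∀ m : ℕ, (Fin m → α) → Module.End ℚ V) : Prop :=
  ∀ (q : ℕ) (π : Equiv.Perm (Fin (q + r))), (∀ l : Fin (q + r), q ≤ (l : ℕ) → π l = l) →
    ∀ k : Fin (q + r) → α, A (q + r) (k ∘ π) = A (q + r) k

theorem nsOp_comp_perm {r : ℕ} {A : ∀ m : ℕ, (Fin m → α) → Module.End ℚ V} {p : ℕ}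
    (hA : ∀ π : Equiv.Perm (Fin (p + r)), (∀ l : Fin (p + r), p ≤ (l : ℕ) → π l = l) →
      ∀ k : Fin (p + r) → α, A (p + r) (k ∘ π) = A (p + r) k)
    (z : (Fin p → α) → V) (σ : Equiv.Perm (Fin p)) :
    nsOp r A p (fun k => z (k ∘ σ)) = fun k => nsOp r A p z (k ∘ permCastAdd r σ) := by
  funext k
  simp only [nsOp, hA _ (permCastAdd_apply_of_le r σ)]
  congr 2
  funext i
  simp [permCastAdd_castAdd]

theorem Psym_nsOp_Psym {r : ℕ} {A : ∀ m : ℕ, (Fin m → α) → Module.End ℚ V} {p : ℕ}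
    (hA : ∀ π : Equiv.Perm (Fin (p + r)), (∀ l : Fin (p + r), p ≤ (l : ℕ) → π l = l) →
      ∀ k : Fin (p + r) → α, A (p + r) (k ∘ π) = A (p + r) k)
    (z : (Fin p → α) → V) :
    Psym (p + r) (nsOp r A p (Psym p z)) = Psym (p + r) (nsOp r A p z) := by
  calc Psym (p + r) (nsOp r A p (Psym p z))
      = Psymₗ (p + r) (nsOpₗ r A p
          (((p.factorial : ℚ)⁻¹) • ∑ σ : Equiv.Perm (Fin p), fun k => z (k ∘ σ))) := by
        rw [Psym_eq_inv_factorial_smul_sum p z]; rfl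
    _ = ((p.factorial : ℚ)⁻¹) • ∑ σ : Equiv.Perm (Fin p),
          Psym (p + r) (nsOp r A p fun k => z (k ∘ σ)) := by
        simp only [map_smul, map_sum]; rfl
    _ = ((p.factorial : ℚ)⁻¹) • ∑ _σ : Equiv.Perm (Fin p), Psym (p + r) (nsOp r A p z) := by
        simp only [nsOp_comp_perm hA, Psym_comp_perm]
    _ = Psym (p + r) (nsOp r A p z) := inv_factorial_smul_sum_perm p _

theorem Psym_compNs_congr
    (ops : List (ℕ × (∀ m : ℕ, (Fin m → α) → Module.End ℚ V)))
    (hops : ∀ op ∈ ops, HeadInvariant op.1 op.2) {q : ℕ} {y y' : (Fin q → α) → V}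
    (h : Psym q y = Psym q y') :
    Psym (totalIdx q ops) (compNs q ops y) = Psym (totalIdx q ops) (compNs q ops y') := by
  induction ops generalizing q y y' with
  | nil => exact h
  | cons op rest ih =>
    have hop := hops op List.mem_cons_self q
    refine ih (fun o ho => hops o (List.mem_cons_of_mem _ ho)) ?_
    rw [← Psym_nsOp_Psym hop y, h, Psym_nsOp_Psym hop y']

end Symmetrization

/-- Let `â^{(1)}, …, â^{(f)}` be symmetrized multiplication operators whose associated
families `A_m` (for `m` at least the order) are invariant under permutations of the first
`m - r` arguments among themselves and of the last `r` arguments among themselves.  Then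
for every permutation-invariant `x ∈ 𝓕_p`, the fully symmetrized composition equals the
symmetrization of the non-symmetrized composition:
`â^{(f)}(â^{(f-1)}(⋯ â^{(1)} x ⋯)) = P_sym (â^{(f)}_ns (â^{(f-1)}_ns (⋯ â^{(1)}_ns x ⋯)))`. -/
theorem compSym_eq_psym_compNs {α V : Type*} [AddCommGroup V] [Module ℚ V]
    (ops : List (ℕ × (∀ m : ℕ, (Fin m → α) → Module.End ℚ V)))
    (hops : ∀ op ∈ ops, ∀ m : ℕ, op.1 ≤ m →
      (∀ π : Equiv.Perm (Fin m), (∀ l : Fin m, m - op.1 ≤ (l : ℕ) → π l = l) →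
        ∀ k : Fin m → α, op.2 m (k ∘ π) = op.2 m k) ∧
      (∀ π : Equiv.Perm (Fin m), (∀ l : Fin m, (l : ℕ) < m - op.1 → π l = l) →
        ∀ k : Fin m → α, op.2 m (k ∘ π) = op.2 m k))
    (p : ℕ) (x : (Fin p → α) → V)
    (hx : ∀ ρ : Equiv.Perm (Fin p), ∀ k : Fin p → α, x (k ∘ ρ) = x k) :
    compSym p ops x = Psym (totalIdx p ops) (compNs p ops x) := by
  have hhead : ∀ op ∈ ops, HeadInvariant op.1 op.2 := fun op hop q π hπ =>
    (hops op hop (q + op.1) (Nat.le_add_left _ _)).1 π fun l hl => hπ l (by omega)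
  clear hops
  induction ops generalizing p with
  | nil => exact (Psym_eq_self p hx).symm
  | cons op rest ih =>
    have hrest : ∀ o ∈ rest, HeadInvariant o.1 o.2 := fun o ho =>
      hhead o (List.mem_cons_of_mem _ ho)
    show compSym (p + op.1) rest (Psym (p + op.1) (nsOp op.1 op.2 p x))
      = Psym _ (compNs (p + op.1) rest (nsOp op.1 op.2 p x))
    rw [ih _ _ (Psym_apply_comp_perm _ _) hrest]
    exact Psym_compNs_congr rest hrest (Psym_Psym _ _)
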